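/- Let E be a normed space over ℂ and let N ⊆ E be a subspace of finite dimension n ≥ 1. Then there exists a continuous linear map P : E → E such that P(E) ⊆ N, P x = x for every x ∈ N (so P is a projection of E onto N), and ‖P‖ ≤ n. -/

import Mathlib

/-!
Among all families of `n` vectors in the unit ball of `N`, pick one of maximal volume
`|det|`. Replacing its `i`-th vector by `x` multiplies the volume by the `i`-th coordinate of
`x`, so these coordinate functionals have norm at most one (an Auerbach basis). Extending them
to `E` by Hahn–Banach without increasing their norms gives `P e = ∑ i, x_i^*(e) x_i`, a sum of
`n` operators of norm at most one.
-/

open Metric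

namespace Module.Basis

variable {𝕜 F ι : Type*} [RCLike 𝕜] [NormedAddCommGroup F] [NormedSpace 𝕜 F]

structure IsAuerbach (b : Basis ι 𝕜 F) : Prop where
  norm_eq_one : ∀ i, ‖b i‖ = 1
  norm_coord_le : ∀ i x, ‖b.coord i x‖ ≤ ‖x‖

section Existence

variable [Fintype ι] [DecidableEq ι]

theorem continuous_det [FiniteDimensional 𝕜 F] (b : Basis ι 𝕜 F) :
    Continuous fun v : ι → F => b.det v := by
  simpa only [b.det_apply] using b.continuous_toMatrix.matrix_det

theorem det_inv_norm_smul_ne_zero (b : Basis ι 𝕜 F) :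
    b.det (fun i => (‖b i‖⁻¹ : 𝕜) • b i) ≠ 0 := by
  rw [b.det.map_smul_univ, b.det_self, smul_eq_mul, mul_one]
  exact Finset.prod_ne_zero_iff.mpr fun i _ => by simpa using b.ne_zero i

theorem isAuerbach_mk_of_isMaxOn_norm_det (b : Basis ι 𝕜 F) {v : ι → F}
    (hv : v ∈ Set.univ.pi fun _ => closedBall (0 : F) 1)
    (hmax : IsMaxOn (fun w => ‖b.det w‖) (Set.univ.pi fun _ => closedBall (0 : F) 1) v)
    (hli : LinearIndependent 𝕜 v) (hsp : ⊤ ≤ Submodule.span 𝕜 (Set.range v)) :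
    (Basis.mk hli hsp).IsAuerbach := by
  have hdet : b.det v ≠ 0 := (b.is_basis_iff_det.mp ⟨hli, top_le_iff.mp hsp⟩).ne_zero
  have hcoord_ball : ∀ i, ∀ x ∈ closedBall (0 : F) 1, ‖(Basis.mk hli hsp).coord i x‖ ≤ 1 := by
    intro i x hx
    have hupdate : ‖b.det v * (Basis.mk hli hsp).coord i x‖ = ‖b.det (Function.update v i x)‖ :=
      congrArg (‖·‖) (LinearMap.congr_fun (b.det_smul_mk_coord_eq_det_update hli hsp i) x)
    have hle : ‖b.det (Function.update v i x)‖ ≤ ‖b.det v‖ :=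
      hmax ((Set.update_mem_pi_iff_of_mem hv).mpr fun _ => hx)
    rw [norm_mul] at hupdate
    nlinarith [norm_pos_iff.mpr hdet]
  have hcoord : ∀ i x, ‖(Basis.mk hli hsp).coord i x‖ ≤ ‖x‖ := fun i x => by
    simpa using ((Basis.mk hli hsp).coord i).bound_of_ball_bound' one_pos 1 (hcoord_ball i) x
  refine ⟨fun i => le_antisymm ?_ ?_, hcoord⟩ <;> rw [Basis.mk_apply]
  · simpa using hv i trivial
  · simpa only [Basis.mk_coord_apply_eq, norm_one] using hcoord i (v i)

theorem exists_isAuerbach [FiniteDimensional 𝕜 F] (b : Basis ι 𝕜 F) :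
    ∃ b' : Basis ι 𝕜 F, b'.IsAuerbach := by
  have := FiniteDimensional.proper_rclike 𝕜 F
  set S := Set.univ.pi fun _ : ι => closedBall (0 : F) 1
  have hnormalize : (fun i => (‖b i‖⁻¹ : 𝕜) • b i) ∈ S := fun i _ =>
    mem_closedBall_zero_iff.mpr (norm_smul_inv_norm (b.ne_zero i)).le
  obtain ⟨v, hv, hmax⟩ := (isCompact_univ_pi fun _ => isCompact_closedBall 0 1).exists_isMaxOn
    ⟨_, hnormalize⟩ b.continuous_det.norm.continuousOn
  have hdet : b.det v ≠ 0 :=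
    norm_pos_iff.mp ((norm_pos_iff.mpr b.det_inv_norm_smul_ne_zero).trans_le (hmax hnormalize))
  obtain ⟨hli, hsp⟩ := b.is_basis_iff_det.mpr (isUnit_iff_ne_zero.mpr hdet)
  exact ⟨_, b.isAuerbach_mk_of_isMaxOn_norm_det hv hmax hli hsp.ge⟩

end Existence

theorem IsAuerbach.exists_projection_norm_le_card [Fintype ι] {E : Type*} [NormedAddCommGroup E]
    [NormedSpace 𝕜 E] {N : Submodule 𝕜 E} {b : Basis ι 𝕜 N} (hb : b.IsAuerbach) :
    ∃ P : E →L[𝕜] E, (∀ x, P x ∈ N) ∧ (∀ x ∈ N, P x = x) ∧ ‖P‖ ≤ Fintype.card ι := by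
  have hext : ∀ i, ∃ g : StrongDual 𝕜 E, (∀ x : N, g x = b.coord i x) ∧ ‖g‖ ≤ 1 := fun i => by
    obtain ⟨g, hg, hgn⟩ := exists_extension_norm_eq N
      ((b.coord i).mkContinuous 1 fun x => by simpa using hb.norm_coord_le i x)
    exact ⟨g, hg, hgn ▸ LinearMap.mkContinuous_norm_le _ zero_le_one _⟩
  choose g hg hgn using hext
  let Q : E →L[𝕜] N := ∑ i, (g i).smulRight (b i)
  have hQ : ∀ x : N, Q x = x := fun x => by simp [Q, hg, Basis.coord_apply]
  refine ⟨N.subtypeL.comp Q, fun x => (Q x).2, fun x hx => congrArg Subtype.val (hQ ⟨x, hx⟩), ?_⟩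
  calc ‖N.subtypeL.comp Q‖ ≤ ‖Q‖ := (N.subtypeL.opNorm_comp_le Q).trans
        (mul_le_of_le_one_left (norm_nonneg Q) N.norm_subtypeL_le)
    _ ≤ ∑ i, ‖(g i).smulRight (b i)‖ := norm_sum_le _ _
    _ ≤ ∑ _i : ι, 1 := by
        gcongr with i
        rw [ContinuousLinearMap.norm_smulRight_apply, hb.norm_eq_one, mul_one]
        exact hgn i
    _ = Fintype.card ι := by simp

end Module.Basis

theorem exists_projection_norm_le_dim_general (E : Type*) [NormedAddCommGroup E] [NormedSpace ℂ E]
    (N : Submodule ℂ E) [FiniteDimensional ℂ N] (n : ℕ)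
    (hdim : Module.finrank ℂ N = n) :
    ∃ P : E →L[ℂ] E, (∀ x : E, P x ∈ N) ∧ (∀ x ∈ N, P x = x) ∧ ‖P‖ ≤ (n : ℝ) := by
  obtain ⟨b, hb⟩ := (Module.finBasisOfFinrankEq ℂ N hdim).exists_isAuerbach
  simpa using hb.exists_projection_norm_le_card

/-- If `N` is an `n`-dimensional subspace (`n ≥ 1`) of a normed space `E` over `ℂ`, then
there is a continuous linear projection `P : E → E` onto `N` with `‖P‖ ≤ n`. -/
theorem exists_projection_norm_le_dim (E : Type*) [NormedAddCommGroup E] [NormedSpace ℂ E]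
    (N : Submodule ℂ E) [FiniteDimensional ℂ N] (n : ℕ) (hn : 1 ≤ n)
    (hdim : Module.finrank ℂ N = n) :
    ∃ P : E →L[ℂ] E, (∀ x : E, P x ∈ N) ∧ (∀ x ∈ N, P x = x) ∧ ‖P‖ ≤ (n : ℝ) :=
  exists_projection_norm_le_dim_general E N n hdim
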